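/- An operator L = A + conj(B) with A, B ∈ B(H²(𝔻)) is a simple composition operator C_φ + conj(C_π) for some analytic φ, π: 𝔻 → 𝔻 if and only if A(zⁿ) = (Az)ⁿ and B(zⁿ) = (Bz)ⁿ for all n ∈ ℕ. -/

import Mathlib

open Complex Metric Filter Topology

noncomputable section

/-- The Hardy space `H²(𝔻)` modeled by square-summable coefficient sequences. -/
abbrev H2 : Type := lp (fun _ : ℕ => ℂ) 2

/-- The analytic function attached to `a ∈ H²`: `z ↦ ∑ aₙ zⁿ`. -/
def toFun (a : H2) (z : ℂ) : ℂ := ∑' n : ℕ, (a : ∀ _ : ℕ, ℂ) n * z ^ n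

/-- A pair `(a, b) : H2 × H2` represents the complex harmonic function `a + conj b`.
This is the inner product of `HH²(𝔻)`: `(a + conj b, c + conj d) = (a,c) + conj (b,d)`
(conjugate-linear in the first entry, following Mathlib's convention).
Note that the scalar action of `HH²(𝔻)` on the pair model is
`c • (a, b) = (c • a, conj c • b)`, since `c (a + conj b) = c a + conj (conj c · b)`. -/
def hinner (p q : H2 × H2) : ℂ :=
  (inner ℂ p.1 q.1 : ℂ) + (starRingEnd ℂ) (inner ℂ p.2 q.2 : ℂ)

/-- The norm of `HH²(𝔻)`. -/
def hnorm (p : H2 × H2) : ℝ := Real.sqrt (‖p.1‖ ^ 2 + ‖p.2‖ ^ 2)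

/-- The operator `A + conj B` acting on `HH²(𝔻)`: `(A + conj B)(a + conj b) = Aa + conj (Bb)`. -/
def opH (A B : H2 →L[ℂ] H2) (p : H2 × H2) : H2 × H2 := (A p.1, B p.2)

/-- The monomial `eₙ = zⁿ` as an element of `H²`; as an element of `HH²` it is `(eH n, 0)`. -/
def eH (n : ℕ) : H2 := lp.single 2 n (1 : ℂ)

/-!
Evaluation at `z ∈ 𝔻` is the inner product with the Szegő kernel `k_z = ∑ conj(z)ⁿ eₙ`, so for
`a = ∑ aₙ eₙ` continuity gives `(T a)(z) = ∑ aₙ (T eₙ)(z)`. If `T eₙ = (T e₁)ⁿ`, this is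
`∑ aₙ φ(z)ⁿ = a(φ z)` with `φ = T e₁`, and since the series converges for every `a ∈ ℓ²`,
testing against `aₙ = uⁿ / (n + 1)` with `u φ(z) = |φ(z)|` shows `|φ(z)| < 1`.
-/

theorem memℓp_two_of_summable_norm_sq {ι : Type*} {E : ι → Type*}
    [∀ i, NormedAddCommGroup (E i)] {f : ∀ i, E i} (hf : Summable fun i => ‖f i‖ ^ 2) :
    Memℓp f 2 :=
  memℓp_gen (by simpa using hf)

theorem not_summable_one_div_natCast_add_one : ¬ Summable fun n : ℕ => 1 / ((n : ℝ) + 1) := by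
  simpa using (summable_nat_add_iff 1).not.2 Real.not_summable_one_div_natCast

def szegoKernel (z : ℂ) (hz : ‖z‖ < 1) : H2 :=
  ⟨fun n => (starRingEnd ℂ z) ^ n, memℓp_two_of_summable_norm_sq <|
    (summable_geometric_of_lt_one (by positivity)
      (pow_lt_one₀ (norm_nonneg z) hz two_ne_zero)).congr
        fun n => by rw [norm_pow, RCLike.norm_conj, ← pow_mul, ← pow_mul, mul_comm]⟩

theorem toFun_eq_inner_szegoKernel (a : H2) {z : ℂ} (hz : ‖z‖ < 1) :
    toFun a z = inner ℂ (szegoKernel z hz) a := by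
  rw [lp.inner_eq_tsum, toFun]
  exact tsum_congr fun n => by simp [szegoKernel, mul_comm]

theorem toFun_eH (n : ℕ) (z : ℂ) : toFun (eH n) z = z ^ n := by
  rw [toFun, tsum_eq_single n]
  · rw [eH, lp.single_apply_self, one_mul]
  · intro m hm
    rw [eH, lp.single_apply_ne 2 n _ hm, zero_mul]

theorem differentiableOn_toFun (a : H2) : DifferentiableOn ℂ (toFun a) (ball 0 1) := by
  intro z hz
  obtain ⟨r, hzr, hr⟩ := exists_between (mem_ball_zero_iff.1 hz)
  have hdiff : DifferentiableOn ℂ (toFun a) (ball 0 r) := by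
    refine differentiableOn_tsum_of_summable_norm
      ((summable_geometric_of_lt_one ((norm_nonneg z).trans hzr.le) hr).mul_left ‖a‖)
      (fun n => ((differentiable_pow n).const_mul _).differentiableOn) isOpen_ball
      fun n w hw => ?_
    rw [norm_mul, norm_pow]
    exact mul_le_mul (lp.norm_apply_le_norm two_ne_zero a n)
      (pow_le_pow_left₀ (norm_nonneg w) (mem_ball_zero_iff.1 hw).le n) (by positivity)
      (norm_nonneg a)
  exact (hdiff.differentiableAt (isOpen_ball.mem_nhds (mem_ball_zero_iff.2 hzr)))
    |>.differentiableWithinAt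

theorem hasSum_coeff_smul_eH (a : H2) : HasSum (fun n => a n • eH n) a := by
  simpa [eH, ← lp.single_smul] using lp.hasSum_single ENNReal.ofNat_ne_top a

theorem hasSum_toFun_apply (T : H2 →L[ℂ] H2) (a : H2) {z : ℂ} (hz : ‖z‖ < 1) :
    HasSum (fun n => a n * toFun (T (eH n)) z) (toFun (T a) z) := by
  simpa [toFun_eq_inner_szegoKernel _ hz] using
    (hasSum_coeff_smul_eH a).mapL ((innerSL ℂ (szegoKernel z hz)).comp T)

theorem norm_lt_one_of_forall_summable {w : ℂ} (h : ∀ a : H2, Summable fun n => a n * w ^ n) :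
    ‖w‖ < 1 := by
  by_contra! hw
  have hw0 : w ≠ 0 := norm_pos_iff.1 (one_pos.trans_le hw)
  set u : ℂ := ‖w‖ / w
  have hu : ‖u‖ = 1 := by simp [u, hw0]
  have huw : u * w = ‖w‖ := div_mul_cancel₀ _ hw0
  have hmem : Memℓp (fun n : ℕ => u ^ n / (n + 1)) 2 := by
    refine memℓp_two_of_summable_norm_sq <|
      ((summable_nat_add_iff 1).2 (Real.summable_one_div_nat_pow.2 one_lt_two)).congr fun n => ?_
    rw [norm_div, norm_pow, hu, one_pow, ← Nat.cast_succ, Complex.norm_natCast]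
    simp
  have hsum : Summable fun n : ℕ => ‖w‖ ^ n / ((n : ℝ) + 1) := by
    refine Complex.summable_ofReal.1 ((h ⟨_, hmem⟩).congr fun n => ?_)
    change u ^ n / (n + 1) * w ^ n = _
    rw [div_mul_eq_mul_div, ← mul_pow, huw]
    push_cast
    ring
  refine not_summable_one_div_natCast_add_one
    (hsum.of_nonneg_of_le (fun n => by positivity) fun n => ?_)
  gcongr
  exact one_le_pow₀ hw

def IsCompositionOperator (T : H2 →L[ℂ] H2) (φ : ℂ → ℂ) : Prop :=
  DifferentiableOn ℂ φ (ball 0 1) ∧ Set.MapsTo φ (ball 0 1) (ball 0 1) ∧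
    ∀ a : H2, ∀ z ∈ ball (0 : ℂ) 1, toFun (T a) z = toFun a (φ z)

theorem exists_isCompositionOperator_iff (T : H2 →L[ℂ] H2) :
    (∃ φ, IsCompositionOperator T φ) ↔
      ∀ n : ℕ, ∀ z ∈ ball (0 : ℂ) 1, toFun (T (eH n)) z = toFun (T (eH 1)) z ^ n := by
  constructor
  · rintro ⟨φ, -, -, hφ⟩ n z hz
    rw [hφ _ z hz, hφ _ z hz, toFun_eH, toFun_eH, pow_one]
  · intro h
    have hasSum_pow : ∀ a : H2, ∀ z ∈ ball (0 : ℂ) 1,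
        HasSum (fun n => a n * toFun (T (eH 1)) z ^ n) (toFun (T a) z) := fun a z hz => by
      convert hasSum_toFun_apply T a (mem_ball_zero_iff.1 hz) using 3 with n
      rw [h n z hz]
    refine ⟨toFun (T (eH 1)), differentiableOn_toFun _, fun z hz => ?_,
      fun a z hz => (hasSum_pow a z hz).tsum_eq.symm⟩
    exact mem_ball_zero_iff.2 <|
      norm_lt_one_of_forall_summable fun a => (hasSum_pow a z hz).summable

/-- `L = A + conj B` is a simple composition operator `C_φ + conj C_π` (for some analytic
self-maps `φ, π` of `𝔻`) if and only if `A(zⁿ) = (Az)ⁿ` and `B(zⁿ) = (Bz)ⁿ` for all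
`n ∈ ℕ`. -/
theorem stmt18 (A B : H2 →L[ℂ] H2) :
    (∃ φ π : ℂ → ℂ,
      DifferentiableOn ℂ φ (ball (0 : ℂ) 1) ∧
      Set.MapsTo φ (ball (0 : ℂ) 1) (ball (0 : ℂ) 1) ∧
      DifferentiableOn ℂ π (ball (0 : ℂ) 1) ∧
      Set.MapsTo π (ball (0 : ℂ) 1) (ball (0 : ℂ) 1) ∧
      (∀ a : H2, ∀ z ∈ ball (0 : ℂ) 1, toFun (A a) z = toFun a (φ z)) ∧
      (∀ b : H2, ∀ z ∈ ball (0 : ℂ) 1, toFun (B b) z = toFun b (π z))) ↔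
    ((∀ n : ℕ, ∀ z ∈ ball (0 : ℂ) 1, toFun (A (eH n)) z = toFun (A (eH 1)) z ^ n) ∧
     (∀ n : ℕ, ∀ z ∈ ball (0 : ℂ) 1, toFun (B (eH n)) z = toFun (B (eH 1)) z ^ n)) := by
  rw [← exists_isCompositionOperator_iff, ← exists_isCompositionOperator_iff]
  constructor
  · rintro ⟨φ, π, hφd, hφm, hπd, hπm, hA, hB⟩
    exact ⟨⟨φ, hφd, hφm, hA⟩, ⟨π, hπd, hπm, hB⟩⟩
  · rintro ⟨⟨φ, hφd, hφm, hA⟩, ⟨π, hπd, hπm, hB⟩⟩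
    exact ⟨φ, π, hφd, hφm, hπd, hπm, hA, hB⟩
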